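/- arXiv:0704.1922 — 2 statements merged into one kernel-verified Lean document; each statement's English description precedes it below -/
import Mathlib

section
/- Let H be a quasiconvex subgroup of a hyperbolic group G with limit set Λ ⊂ ∂G, and let ℒ be the collection of translates gΛ of Λ by representatives of distinct cosets of H. Then for every ε > 0, the set ℒ_ε = { L ∈ ℒ : the visual diameter of L in ∂G is at least ε } is finite. -/
/-!
Common coarse-geometric definitions used to formalize statements from
"Relative Rigidity, Quasiconvexity and C-Complexes" (Mahan Mj).

We model the Cayley graph of a finitely generated group by the group itself
equipped with a word metric (the vertex set of the Cayley graph, with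
bi-infinite geodesics modelled by `ℤ`-parametrized discrete geodesics), and we
set up all basic notions (Gromov products, hyperbolicity, the Gromov boundary
via Gromov sequences, limit sets, joins, quasiconvexity, electric metrics and
relative hyperbolicity à la Farb, uniformly proper maps, quasi-isometries)
relative to an abstract distance function `d : α → α → ℝ`.
-/

open Filter Set Metric
open scoped ENNReal

noncomputable section

namespace RelRig

universe u v

variable {α β : Type*}

/-- Gromov product of `x`, `y` based at `w`. -/
def gpD (d : α → α → ℝ) (w x y : α) : ℝ := (d w x + d w y - d x y) / 2

/-- `d` satisfies the Gromov four-point condition with constant `δ`. -/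
def DeltaHypD (d : α → α → ℝ) (δ : ℝ) : Prop :=
  ∀ w x y z : α, min (gpD d w x y) (gpD d w y z) - δ ≤ gpD d w x z

/-- `d` is Gromov-hyperbolic. -/
def HypD (d : α → α → ℝ) : Prop := ∃ δ ≥ (0 : ℝ), DeltaHypD d δ

/-- distance from a point to a set. -/
def pdistD (d : α → α → ℝ) (x : α) (A : Set α) : ℝ := sInf {r | ∃ a ∈ A, r = d x a}

/-- (infimal) distance between two sets. -/
def setDistD (d : α → α → ℝ) (A B : Set α) : ℝ := sInf {r | ∃ a ∈ A, ∃ b ∈ B, r = d a b}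

/-- closed `r`-neighbourhood of a set. -/
def nbdD (d : α → α → ℝ) (r : ℝ) (A : Set α) : Set α := {x | ∃ a ∈ A, d x a ≤ r}

/-- a sequence going to infinity (a "Gromov sequence"). -/
def GromovSeqD (d : α → α → ℝ) (w : α) (s : ℕ → α) : Prop :=
  Tendsto (fun p : ℕ × ℕ => gpD d w (s p.1) (s p.2)) atTop atTop

/-- asymptoticity of Gromov sequences. -/
def bdryRelD (d : α → α → ℝ) (w : α) (s t : {u : ℕ → α // GromovSeqD d w u}) : Prop :=
  Tendsto (fun p : ℕ × ℕ => gpD d w (s.1 p.1) (t.1 p.2)) atTop atTop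

/-- The Gromov boundary of `(α, d)`: asymptoticity classes of Gromov sequences. -/
def BdryD (d : α → α → ℝ) (w : α) := Quot (bdryRelD d w)

/-- `s` converges to the boundary point `ξ`. -/
def ConvTo (d : α → α → ℝ) (w : α) (s : ℕ → α) (ξ : BdryD d w) : Prop :=
  ∃ hs : GromovSeqD d w s, Quot.mk (bdryRelD d w) ⟨s, hs⟩ = ξ

/-- the limit set of a subset `A ⊆ α` in the Gromov boundary. -/
def limitSetD (d : α → α → ℝ) (w : α) (A : Set α) : Set (BdryD d w) :=
  {ξ | ∃ s : ℕ → α, (∀ n, s n ∈ A) ∧ ConvTo d w s ξ}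

/-- Gromov product of two boundary points. -/
def bgpD (d : α → α → ℝ) (w : α) (ξ η : BdryD d w) : ℝ≥0∞ :=
  ⨆ s : {s : ℕ → α // ConvTo d w s ξ}, ⨆ t : {t : ℕ → α // ConvTo d w t η},
    Filter.liminf (fun p : ℕ × ℕ => ENNReal.ofReal (gpD d w (s.1 p.1) (t.1 p.2))) atTop

open Classical in
/-- the visual (quasi-)metric on the boundary. -/
def vdistD (d : α → α → ℝ) (w : α) (ξ η : BdryD d w) : ℝ :=
  if ξ = η then 0 else Real.exp (-(bgpD d w ξ η).toReal)

/-- visual diameter of a subset of the boundary. -/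
def vdiamD (d : α → α → ℝ) (w : α) (Λ : Set (BdryD d w)) : ℝ :=
  sSup {r | ∃ ξ ∈ Λ, ∃ η ∈ Λ, r = vdistD d w ξ η}

/-- Hausdorff distance between two subsets of the boundary (visual metric). -/
def vHdistD (d : α → α → ℝ) (w : α) (A B : Set (BdryD d w)) : ℝ :=
  max (sSup {r | ∃ a ∈ A, r = sInf {t | ∃ b ∈ B, t = vdistD d w a b}})
      (sSup {r | ∃ b ∈ B, r = sInf {t | ∃ a ∈ A, t = vdistD d w a b}})

/-- closed subsets of the boundary w.r.t. the visual metric. -/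
def VClosed (d : α → α → ℝ) (w : α) (K : Set (BdryD d w)) : Prop :=
  ∀ ξ : BdryD d w, (∀ ε > (0 : ℝ), ∃ η ∈ K, vdistD d w ξ η < ε) → ξ ∈ K

/-- A family (multiset) of boundary subsets is a discrete subset of `C_c⁰(∂X)`,
the space of closed subsets of the boundary having more than one point, with the
Hausdorff topology: the family does not accumulate (with multiplicity) at any
closed subset of the boundary having more than one point. -/
def DiscreteFamilyD {ι : Type*} (d : α → α → ℝ) (w : α) (L : ι → Set (BdryD d w)) : Prop :=
  ∀ K : Set (BdryD d w), VClosed d w K → K.Nontrivial →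
    ¬ (∀ ε > (0 : ℝ), {i : ι | vHdistD d w (L i) K < ε}.Infinite)

/-- discrete geodesic of length `m` (suitable for graphs/word metrics). -/
def DiscGeodD (d : α → α → ℝ) (c : ℕ → α) (m : ℕ) : Prop :=
  ∀ i, i ≤ m → ∀ j, j ≤ m → d (c i) (c j) = |(i : ℝ) - (j : ℝ)|

/-- discrete bi-infinite geodesic. -/
def DiscLineD (d : α → α → ℝ) (γ : ℤ → α) : Prop :=
  ∀ i j : ℤ, d (γ i) (γ j) = |(i : ℝ) - (j : ℝ)|

/-- `A` is a `K`-quasiconvex subset: every (discrete) geodesic with endpoints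
in `A` stays in the `K`-neighbourhood of `A`. -/
def QCSetD (d : α → α → ℝ) (K : ℝ) (A : Set α) : Prop :=
  ∀ (c : ℕ → α) (m : ℕ), DiscGeodD d c m → c 0 ∈ A → c m ∈ A →
    ∀ i, i ≤ m → pdistD d (c i) A ≤ K

/-- both endpoints of the bi-infinite geodesic `γ` lie in `Λ`. -/
def LineEndsInD (d : α → α → ℝ) (w : α) (γ : ℤ → α) (Λ : Set (BdryD d w)) : Prop :=
  (∃ ξ ∈ Λ, ConvTo d w (fun n : ℕ => γ (n : ℤ)) ξ) ∧
  (∃ η ∈ Λ, ConvTo d w (fun n : ℕ => γ (-(n : ℤ))) η)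

/-- the join `J(Λ)`: the union of all bi-infinite geodesics with both endpoints in `Λ`. -/
def joinD (d : α → α → ℝ) (w : α) (Λ : Set (BdryD d w)) : Set α :=
  {p | ∃ γ : ℤ → α, DiscLineD d γ ∧ LineEndsInD d w γ Λ ∧ p ∈ Set.range γ}

/-- a nearest-point projection onto `A`. -/
def IsNearestProjD (d : α → α → ℝ) (A : Set α) (P : α → α) : Prop :=
  ∀ x : α, P x ∈ A ∧ ∀ a ∈ A, d x (P x) ≤ d x a

/-- uniformly proper pairing of two collections of subsets (Schwarz, Mj). -/
def UProperD {ι κ : Type*} (d₁ : α → α → ℝ) (d₂ : β → β → ℝ)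
    (J₁ : ι → Set α) (J₂ : κ → Set β) (φ : ι → κ) : Prop :=
  ∃ f : ℕ → ℕ, ∀ (n : ℕ) (i i' : ι),
    (setDistD d₁ (J₁ i) (J₁ i') ≤ (n : ℝ) →
      setDistD d₂ (J₂ (φ i)) (J₂ (φ i')) ≤ (f n : ℝ)) ∧
    (setDistD d₂ (J₂ (φ i)) (J₂ (φ i')) ≤ (n : ℝ) →
      setDistD d₁ (J₁ i) (J₁ i') ≤ (f n : ℝ))

/-- `q` pairs the collections `J₁`, `J₂` as `φ` does. -/
def PairsAsD {ι κ : Type*} (d₁ : α → α → ℝ) (d₂ : β → β → ℝ)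
    (q : α → β) (J₁ : ι → Set α) (J₂ : κ → Set β) (φ : ι → κ) : Prop :=
  ∃ h : ℕ → ℕ, ∀ (n : ℕ) (p : α) (i : ι),
    pdistD d₁ p (J₁ i) ≤ (n : ℝ) → pdistD d₂ (q p) (J₂ (φ i)) ≤ (h n : ℝ)

/-- quasi-isometry between `(α, d₁)` and `(β, d₂)`. -/
def QIMapD (d₁ : α → α → ℝ) (d₂ : β → β → ℝ) (q : α → β) : Prop :=
  ∃ lam C : ℝ, 1 ≤ lam ∧ 0 ≤ C ∧
    (∀ x y : α, d₂ (q x) (q y) ≤ lam * d₁ x y + C ∧ d₁ x y ≤ lam * d₂ (q x) (q y) + C) ∧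
    (∀ z : β, ∃ x : α, d₂ z (q x) ≤ C)

/-! ### Word metrics, quasiconvex subgroups, limit sets of cosets -/

section Groups
variable {G : Type*} [Group G]

/-- the word metric associated to a (symmetrized) generating set `S`. -/
def wdist (S : Set G) (g h : G) : ℝ :=
  sInf {r | ∃ l : List G, (∀ x ∈ l, x ∈ S ∨ x⁻¹ ∈ S) ∧ l.prod = g⁻¹ * h ∧ r = (l.length : ℝ)}

/-- the left coset `gH` as a subset of `G`. -/
def cosetSet (H : Subgroup G) (g : G) : Set G := {x | g⁻¹ * x ∈ H}

/-- `R` contains exactly one representative of each left coset of `H`. -/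
def IsCosetReps (H : Subgroup G) (R : Set G) : Prop :=
  ∀ g : G, ∃! r : G, r ∈ R ∧ g⁻¹ * r ∈ H

/-- the translate `gΛ(H)` of the limit set of `H` in the Gromov boundary:
the limit set of the coset `gH`. -/
def cosetLimitSet (S : Set G) (H : Subgroup G) (g : G) : Set (BdryD (wdist S) (1 : G)) :=
  limitSetD (wdist S) 1 (cosetSet H g)

/-- the join `J(gΛ(H))` of the translate `gΛ(H)` of the limit set of `H`. -/
def cosetJoin (S : Set G) (H : Subgroup G) (g : G) : Set G :=
  joinD (wdist S) 1 (cosetLimitSet S H g)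

/-- quasiconvex subgroup w.r.t. the word metric of `S`. -/
def QCSubgroup (S : Set G) (H : Subgroup G) : Prop :=
  ∃ C ≥ (0 : ℝ), QCSetD (wdist S) C (H : Set G)

/-- malnormal subgroup: `gHg⁻¹ ∩ H` is trivial for `g ∉ H`. -/
def Malnormal (H : Subgroup G) : Prop :=
  ∀ g : G, g ∉ H → ∀ x : G, x ∈ H → g * x * g⁻¹ ∈ H → x = 1

end Groups

/-! ### Relative hyperbolicity (Farb: electric space + bounded penetration) -/

section RelHyp
variable {α : Type*}

open Classical in
/-- cost of one step of an electric chain: travelling within a horosphere-like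
set costs at most `1` (passing through the cone point). -/
def stepCost (d : α → α → ℝ) (ℋ : Set (Set α)) (a b : α) : ℝ :=
  if ∃ H ∈ ℋ, a ∈ H ∧ b ∈ H then min 1 (d a b) else d a b

/-- electric length of the portion `[i, j]` of a chain. -/
def chainLen (d : α → α → ℝ) (ℋ : Set (Set α)) (p : ℕ → α) (i j : ℕ) : ℝ :=
  ∑ k ∈ Finset.Ico i j, stepCost d ℋ (p k) (p (k + 1))

/-- the electric (coned-off) pseudo-metric of Farb's electric space. -/
def elDist (d : α → α → ℝ) (ℋ : Set (Set α)) (x y : α) : ℝ :=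
  sInf {r | ∃ (n : ℕ) (p : ℕ → α), p 0 = x ∧ p n = y ∧ r = chainLen d ℋ p 0 n}

/-- weak relative hyperbolicity: the electric space is hyperbolic. -/
def WeakRelHyp (d : α → α → ℝ) (ℋ : Set (Set α)) : Prop := HypD (elDist d ℋ)

/-- an electric `P`-quasigeodesic chain. -/
def ElQG (d : α → α → ℝ) (ℋ : Set (Set α)) (P : ℝ) (p : ℕ → α) (n : ℕ) : Prop :=
  ∀ i j : ℕ, i ≤ j → j ≤ n → chainLen d ℋ p i j ≤ P * elDist d ℋ (p i) (p j) + P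

/-- the chain does not return to the `ε`-neighbourhood of any horosphere-like
set after leaving it. -/
def NoBacktrack (d : α → α → ℝ) (ℋ : Set (Set α)) (ε : ℝ) (p : ℕ → α) (n : ℕ) : Prop :=
  ∀ H ∈ ℋ, ∀ i j k : ℕ, i < j → j < k → k ≤ n →
    p i ∈ nbdD d ε H → p k ∈ nbdD d ε H → p j ∈ nbdD d ε H

/-- the chain meets `S`. -/
def MeetsChain (p : ℕ → α) (n : ℕ) (S : Set α) : Prop := ∃ i ≤ n, p i ∈ S

/-- `i` is the entry point of the chain into the `ε`-neighbourhood of `H`. -/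
def IsEntry (d : α → α → ℝ) (ε : ℝ) (H : Set α) (p : ℕ → α) (n i : ℕ) : Prop :=
  i ≤ n ∧ p i ∈ nbdD d ε H ∧ ∀ j, j < i → p j ∉ nbdD d ε H

/-- `i` is the exit point of the chain from the `ε`-neighbourhood of `H`. -/
def IsExit (d : α → α → ℝ) (ε : ℝ) (H : Set α) (p : ℕ → α) (n i : ℕ) : Prop :=
  i ≤ n ∧ p i ∈ nbdD d ε H ∧ ∀ j, i < j → j ≤ n → p j ∉ nbdD d ε H

/-- coarse intrinsic path-metric of a subset `S`. -/
def inDist (d : α → α → ℝ) (S : Set α) (x y : α) : ℝ :=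
  sInf {r | ∃ (n : ℕ) (p : ℕ → α), p 0 = x ∧ p n = y ∧ (∀ i, i ≤ n → p i ∈ S) ∧
    (∀ i, i < n → d (p i) (p (i + 1)) ≤ 1) ∧
    r = ∑ k ∈ Finset.range n, d (p k) (p (k + 1))}

/-- Bounded penetration: electric quasigeodesics without backtracking with the
same endpoints have similar intersection patterns with horosphere-like sets. -/
def BddPenetration (d : α → α → ℝ) (ℋ : Set (Set α)) : Prop :=
  ∀ P ≥ (1 : ℝ), ∃ ε ≥ (0 : ℝ), ∃ D ≥ (0 : ℝ),
    ∀ (p q : ℕ → α) (n m : ℕ), p 0 = q 0 → p n = q m →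
      ElQG d ℋ P p n → ElQG d ℋ P q m →
      NoBacktrack d ℋ ε p n → NoBacktrack d ℋ ε q m →
      ∀ H ∈ ℋ,
        (¬ MeetsChain q m (nbdD d ε H) →
          ∀ i j, IsEntry d ε H p n i → IsExit d ε H p n j →
            inDist d (nbdD d ε H) (p i) (p j) ≤ D) ∧
        (MeetsChain q m (nbdD d ε H) →
          (∀ i j, IsEntry d ε H p n i → IsEntry d ε H q m j →
            inDist d (nbdD d ε H) (p i) (q j) ≤ D) ∧
          (∀ i j, IsExit d ε H p n i → IsExit d ε H q m j →
            inDist d (nbdD d ε H) (p i) (q j) ≤ D))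

/-- the collection `ℋ` is uniformly separated. -/
def UnifSeparated (d : α → α → ℝ) (ℋ : Set (Set α)) : Prop :=
  ∃ ε > (0 : ℝ), ∀ H₁ ∈ ℋ, ∀ H₂ ∈ ℋ, H₁ ≠ H₂ → ε ≤ setDistD d H₁ H₂

/-- strong relative hyperbolicity (Farb's definition; equivalent to Gromov's
definition via hyperbolic cones, by Bowditch). -/
def StrongRelHyp (d : α → α → ℝ) (ℋ : Set (Set α)) : Prop :=
  UnifSeparated d ℋ ∧ WeakRelHyp d ℋ ∧ BddPenetration d ℋ

end RelHyp

/-! ### Geodesic metric spaces, CAT(0) spaces, flats, symmetric spaces -/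

section MetricGeo
variable {X : Type*} [MetricSpace X]

/-- `γ` is a unit-speed parametrization of a geodesic from `x` to `y`. -/
def GeodParam (γ : ℝ → X) (x y : X) : Prop :=
  γ 0 = x ∧ γ (dist x y) = y ∧
    ∀ s ∈ Icc (0 : ℝ) (dist x y), ∀ t ∈ Icc (0 : ℝ) (dist x y), dist (γ s) (γ t) = |s - t|

/-- `s` is (the image of) a geodesic segment from `x` to `y`. -/
def IsGeodSeg (x y : X) (s : Set X) : Prop :=
  ∃ γ : ℝ → X, GeodParam γ x y ∧ s = γ '' Icc (0 : ℝ) (dist x y)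

/-- geodesic metric space. -/
def GeodesicSpace (X : Type*) [MetricSpace X] : Prop := ∀ x y : X, ∃ s : Set X, IsGeodSeg x y s

/-- `A` is a `K`-quasiconvex subset of the metric space `X`. -/
def QCSet (K : ℝ) (A : Set X) : Prop :=
  ∀ x ∈ A, ∀ y ∈ A, ∀ s : Set X, IsGeodSeg x y s → ∀ p ∈ s, Metric.infDist p A ≤ K

/-- `γ` is a bi-infinite (unit-speed) geodesic. -/
def IsGeodLine (γ : ℝ → X) : Prop := ∀ a b : ℝ, dist (γ a) (γ b) = |a - b|

/-- both endpoints of the geodesic line `γ` lie in `Λ`. -/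
def lineEndsIn (w : X) (γ : ℝ → X) (Λ : Set (BdryD (fun x y : X => dist x y) w)) : Prop :=
  (∃ ξ ∈ Λ, ConvTo (fun x y : X => dist x y) w (fun n : ℕ => γ (n : ℝ)) ξ) ∧
  (∃ η ∈ Λ, ConvTo (fun x y : X => dist x y) w (fun n : ℕ => γ (-(n : ℝ))) η)

/-- the join of `Λ ⊆ ∂X`: the union of bi-infinite geodesics with endpoints in `Λ`. -/
def joinR (w : X) (Λ : Set (BdryD (fun x y : X => dist x y) w)) : Set X :=
  {p | ∃ γ : ℝ → X, IsGeodLine γ ∧ lineEndsIn w γ Λ ∧ p ∈ Set.range γ}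

/-- CAT(0) space, via the CN (Bruhat–Tits) midpoint inequality. -/
def CAT0 (X : Type*) [MetricSpace X] : Prop :=
  GeodesicSpace X ∧ ∀ x y z m : X, dist y m = dist y z / 2 → dist z m = dist y z / 2 →
    dist x m ^ 2 ≤ (dist x y ^ 2 + dist x z ^ 2) / 2 - dist y z ^ 2 / 4

/-- a `k`-flat: an isometrically embedded copy of Euclidean `k`-space. -/
def FlatOfDim (k : ℕ) (F : Set X) : Prop :=
  ∃ f : EuclideanSpace ℝ (Fin k) → X, Isometry f ∧ Set.range f = F

/-- a flat (of dimension at least 2). -/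
def IsFlat2 (F : Set X) : Prop := ∃ k : ℕ, 2 ≤ k ∧ FlatOfDim k F

/-- a maximal flat. -/
def IsMaxFlat (F : Set X) : Prop := IsFlat2 F ∧ ∀ F' : Set X, IsFlat2 F' → F ⊆ F' → F' = F

/-- isolated flats: every flat is uniformly close to a maximal one, and
neighbourhoods of distinct maximal flats have uniformly bounded overlap. -/
def IsolatedFlats (X : Type*) [MetricSpace X] : Prop :=
  (∃ D ≥ (0 : ℝ), ∀ F : Set X, IsFlat2 F →
    ∃ F' : Set X, IsMaxFlat F' ∧ ∀ x ∈ F, Metric.infDist x F' ≤ D) ∧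
  (∀ ρ ≥ (0 : ℝ), ∃ κ ≥ (0 : ℝ), ∀ F F' : Set X, IsMaxFlat F → IsMaxFlat F' → F ≠ F' →
    ∀ x y : X, Metric.infDist x F ≤ ρ → Metric.infDist x F' ≤ ρ →
      Metric.infDist y F ≤ ρ → Metric.infDist y F' ≤ ρ → dist x y ≤ κ)

/-- a (globally) symmetric space of non-positive curvature: a CAT(0) space with
a geodesic point-symmetry at every point. -/
def SymmSpaceNonpos (X : Type*) [MetricSpace X] : Prop :=
  CAT0 X ∧ ∀ x : X, ∃ σ : X ≃ᵢ X, σ x = x ∧ ∀ y : X, dist y (σ y) = 2 * dist x y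

/-- `X` has rank `r`: it contains an `r`-flat but no `(r+1)`-flat. -/
def HasRank (X : Type*) [MetricSpace X] (r : ℕ) : Prop :=
  (∃ F : Set X, FlatOfDim r F) ∧ ∀ F : Set X, ¬ FlatOfDim (r + 1) F

end MetricGeo

/-! ### Group actions -/

/-- a geometric action: by isometries, metrically proper and cobounded. -/
def GeometricAction (G : Type*) [Group G] (X : Type*) [MetricSpace X] [MulAction G X] : Prop :=
  (∀ g : G, Isometry (fun x : X => g • x)) ∧
  (∀ x₀ : X, ∀ r : ℝ, {g : G | dist x₀ (g • x₀) ≤ r}.Finite) ∧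
  (∀ x₀ : X, ∃ C : ℝ, ∀ x : X, ∃ g : G, dist x (g • x₀) ≤ C)

/-- `𝒥` is the `G`-equivariant family of lifts of a maximal totally geodesic
torus (of dimension `r = rank`) in the compact locally symmetric space `X/G`:
an orbit of a periodic `r`-flat. -/
def TorusLiftFamily (G : Type*) [Group G] {X : Type*} [MetricSpace X] [MulAction G X]
    (r : ℕ) (𝒥 : Set (Set X)) : Prop :=
  (∀ J ∈ 𝒥, FlatOfDim r J) ∧
  (∃ F₀ ∈ 𝒥, 𝒥 = {J : Set X | ∃ g : G, J = (fun x : X => g • x) '' F₀}) ∧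
  (∃ C ≥ (0 : ℝ), ∀ J ∈ 𝒥, ∀ x ∈ J, ∀ y ∈ J,
    ∃ g : G, (fun z : X => g • z) '' J = J ∧ dist x (g • y) ≤ C)

/-! ### Convergence groups, annulus systems and cross-ratios (Bowditch) -/

/-- the space of distinct triples of `M`. -/
def distinctTriples (M : Type*) : Set (M × M × M) :=
  {p | p.1 ≠ p.2.1 ∧ p.1 ≠ p.2.2 ∧ p.2.1 ≠ p.2.2}

/-- the diagonal action on triples. -/
def tripleAct {G M : Type*} [Group G] [MulAction G M] (g : G) (p : M × M × M) : M × M × M :=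
  (g • p.1, g • p.2.1, g • p.2.2)

/-- a uniform convergence group action: the action on the space of distinct
triples is properly discontinuous and cocompact. -/
def UniformConvergenceAction (G : Type*) [Group G] (M : Type*) [TopologicalSpace M]
    [MulAction G M] : Prop :=
  (∀ g : G, Continuous (fun x : M => g • x)) ∧
  (∀ K : Set (M × M × M), K ⊆ distinctTriples M → IsCompact K →
    {g : G | (tripleAct g '' K ∩ K).Nonempty}.Finite) ∧
  (∃ K : Set (M × M × M), K ⊆ distinctTriples M ∧ IsCompact K ∧
    ∀ p ∈ distinctTriples M, ∃ g : G, tripleAct g p ∈ K)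

/-- an (unconstrained) ordered pair of subsets of `M`. -/
structure Ann (M : Type*) where
  minus : Set M
  plus : Set M

/-- `A` is an annulus: an ordered pair of disjoint closed subsets not covering `M`. -/
def IsAnnulusOn (M : Type*) [TopologicalSpace M] (A : Ann M) : Prop :=
  IsClosed A.minus ∧ IsClosed A.plus ∧ Disjoint A.minus A.plus ∧ A.minus ∪ A.plus ≠ Set.univ

/-- translate of an annulus. -/
def annAct {G M : Type*} [Group G] [MulAction G M] (g : G) (A : Ann M) : Ann M :=
  ⟨(fun x : M => g • x) '' A.minus, (fun x : M => g • x) '' A.plus⟩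

/-- a nested chain of `m` annuli of `𝒜` separating `K` from `L`:
`K < A₁ < ⋯ < A_m < L`. -/
def SepChain {M : Type*} [TopologicalSpace M] (𝒜 : Set (Ann M)) (K L : Set M) (m : ℕ) : Prop :=
  m = 0 ∨ ∃ A : ℕ → Ann M, (∀ i, i < m → A i ∈ 𝒜) ∧
    K ⊆ interior (A 0).minus ∧ L ⊆ interior (A (m - 1)).plus ∧
    ∀ i, i + 1 < m → interior (A i).minus ∪ interior (A (i + 1)).plus = Set.univ

/-- the annular cross-ratio `(K|L)_𝒜 ∈ ℕ ∪ {∞}`. -/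
def crossRatioAnn {M : Type*} [TopologicalSpace M] (𝒜 : Set (Ann M)) (K L : Set M) : ℕ∞ :=
  sSup {n : ℕ∞ | ∃ m : ℕ, n = (m : ℕ∞) ∧ SepChain 𝒜 K L m}

/-- the limit set of a subgroup of a convergence group. -/
def convLimitSet {G : Type*} [Group G] {M : Type*} [TopologicalSpace M] [MulAction G M]
    (H : Subgroup G) : Set M :=
  {ξ : M | ∃ h : ℕ → H, Function.Injective h ∧
    ∃ x : M, Tendsto (fun n => (h n : G) • x) atTop (nhds ξ)}

/-- discreteness of a family (multiset) of subsets of a metrizable compactum `M`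
in the Hausdorff topology on the space of closed subsets of `M` with more than
one point. -/
def DiscreteFamilyM {ι M : Type*} [MetricSpace M] (L : ι → Set M) : Prop :=
  ∀ K : Set M, IsClosed K → K.Nontrivial →
    ¬ (∀ ε > (0 : ℝ), {i : ι | Metric.hausdorffDist (L i) K < ε}.Infinite)

/-- uniform properness of a pairing with respect to annular cross-ratios. -/
def UProperCRFam {ι κ M₁ M₂ : Type*} [TopologicalSpace M₁] [TopologicalSpace M₂]
    (𝒜₁ : Set (Ann M₁)) (𝒜₂ : Set (Ann M₂))
    (L₁ : ι → Set M₁) (L₂ : κ → Set M₂) (φ : ι → κ) : Prop :=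
  ∃ f : ℕ → ℕ, ∀ (n : ℕ) (i i' : ι),
    (crossRatioAnn 𝒜₁ (L₁ i) (L₁ i') ≤ (n : ℕ∞) →
      crossRatioAnn 𝒜₂ (L₂ (φ i)) (L₂ (φ i')) ≤ (f n : ℕ∞)) ∧
    (crossRatioAnn 𝒜₂ (L₂ (φ i)) (L₂ (φ i')) ≤ (n : ℕ∞) →
      crossRatioAnn 𝒜₁ (L₁ i) (L₁ i') ≤ (f n : ℕ∞))

/-! ### Auxiliary lemmas for the proof -/

section AuxWord
variable {G : Type*} [Group G]

/-- word lengths of representations of `x` by generators. -/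
def genSet (S : Set G) (x : G) : Set ℕ :=
  {n | ∃ l : List G, (∀ y ∈ l, y ∈ S ∨ y⁻¹ ∈ S) ∧ l.prod = x ∧ l.length = n}

lemma genSet_nonempty {S : Set G} (hSgen : Subgroup.closure S = ⊤) (x : G) :
    (genSet S x).Nonempty := by
  have hx : x ∈ Submonoid.closure (S ∪ S⁻¹) := by
    rw [← Subgroup.closure_toSubmonoid, hSgen]
    exact Subgroup.mem_top x
  obtain ⟨l, hl, hprod⟩ := Submonoid.exists_list_of_mem_closure hx
  refine ⟨l.length, l, ?_, hprod, rfl⟩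
  intro y hy
  rcases hl y hy with h | h
  · exact Or.inl h
  · exact Or.inr (Set.mem_inv.mp h)

/-- ℕ-valued word metric. -/
def ndist (S : Set G) (g h : G) : ℕ := sInf (genSet S (g⁻¹ * h))

lemma ndist_le {S : Set G} {g h : G} (l : List G) (hl : ∀ y ∈ l, y ∈ S ∨ y⁻¹ ∈ S)
    (hp : l.prod = g⁻¹ * h) : ndist S g h ≤ l.length :=
  Nat.sInf_le ⟨l, hl, hp, rfl⟩

lemma wdist_eq {S : Set G} (hSgen : Subgroup.closure S = ⊤) (g h : G) :
    wdist S g h = (ndist S g h : ℝ) := by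
  obtain ⟨l, hl, hprod, hlen⟩ := Nat.sInf_mem (genSet_nonempty hSgen (g⁻¹ * h))
  unfold wdist
  apply le_antisymm
  · refine csInf_le ⟨0, ?_⟩ ⟨l, hl, hprod, by exact_mod_cast hlen.symm⟩
    rintro r ⟨l', -, -, rfl⟩
    positivity
  · refine le_csInf ⟨(l.length : ℝ), l, hl, hprod, rfl⟩ ?_
    rintro r ⟨l', hl', hprod', rfl⟩
    exact_mod_cast Nat.sInf_le (⟨l', hl', hprod', rfl⟩ : l'.length ∈ genSet S (g⁻¹ * h))

lemma ndist_symm {S : Set G} (hSgen : Subgroup.closure S = ⊤) (g h : G) :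
    ndist S g h = ndist S h g := by
  suffices H : ∀ a b : G, ndist S a b ≤ ndist S b a from le_antisymm (H g h) (H h g)
  intro a b
  obtain ⟨l, hl, hprod, hlen⟩ := Nat.sInf_mem (genSet_nonempty hSgen (b⁻¹ * a))
  change l.length = ndist S b a at hlen
  have hok : ∀ y ∈ (l.map (fun z => z⁻¹)).reverse, y ∈ S ∨ y⁻¹ ∈ S := by
    intro y hy
    rw [List.mem_reverse, List.mem_map] at hy
    obtain ⟨z, hz, rfl⟩ := hy
    rcases hl z hz with h | h
    · right; simpa using h
    · left; exact h
  have hprod' : ((l.map (fun z => z⁻¹)).reverse).prod = a⁻¹ * b := by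
    rw [← List.prod_inv_reverse, hprod]
    simp
  calc ndist S a b ≤ ((l.map (fun z => z⁻¹)).reverse).length := ndist_le _ hok hprod'
    _ = l.length := by simp
    _ = ndist S b a := hlen

lemma ndist_triangle {S : Set G} (hSgen : Subgroup.closure S = ⊤) (g h k : G) :
    ndist S g k ≤ ndist S g h + ndist S h k := by
  obtain ⟨l₁, hl₁, hp₁, hlen₁⟩ := Nat.sInf_mem (genSet_nonempty hSgen (g⁻¹ * h))
  obtain ⟨l₂, hl₂, hp₂, hlen₂⟩ := Nat.sInf_mem (genSet_nonempty hSgen (h⁻¹ * k))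
  change l₁.length = ndist S g h at hlen₁
  change l₂.length = ndist S h k at hlen₂
  have hok : ∀ y ∈ l₁ ++ l₂, y ∈ S ∨ y⁻¹ ∈ S := by
    intro y hy
    rcases List.mem_append.mp hy with h | h
    exacts [hl₁ y h, hl₂ y h]
  calc ndist S g k ≤ (l₁ ++ l₂).length :=
        ndist_le _ hok (by rw [List.prod_append, hp₁, hp₂]; group)
    _ = ndist S g h + ndist S h k := by rw [List.length_append, hlen₁, hlen₂]

lemma wdist_eq_of {S : Set G} {a b a' b' : G} (h : a⁻¹ * b = a'⁻¹ * b') :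
    wdist S a b = wdist S a' b' := by
  unfold wdist; rw [h]

lemma wdist_left {S : Set G} (g a b : G) : wdist S (g * a) (g * b) = wdist S a b :=
  wdist_eq_of (by group)

lemma wdist_symm {S : Set G} (hSgen : Subgroup.closure S = ⊤) (g h : G) :
    wdist S g h = wdist S h g := by
  rw [wdist_eq hSgen, wdist_eq hSgen, ndist_symm hSgen]

lemma wdist_nonneg {S : Set G} (g h : G) : 0 ≤ wdist S g h := by
  apply Real.sInf_nonneg
  rintro r ⟨l, -, -, rfl⟩
  positivity

lemma wdist_triangle {S : Set G} (hSgen : Subgroup.closure S = ⊤) (g h k : G) :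
    wdist S g k ≤ wdist S g h + wdist S h k := by
  rw [wdist_eq hSgen, wdist_eq hSgen, wdist_eq hSgen]
  exact_mod_cast ndist_triangle hSgen g h k

/-- geodesics exist in the word metric. -/
lemma exists_geodesic {S : Set G} (hSgen : Subgroup.closure S = ⊤) (x y : G) :
    ∃ c : ℕ → G, c 0 = x ∧ c (ndist S x y) = y ∧ DiscGeodD (wdist S) c (ndist S x y) := by
  obtain ⟨l, hl, hprod, hlen⟩ := Nat.sInf_mem (genSet_nonempty hSgen (x⁻¹ * y))
  change l.length = ndist S x y at hlen
  set m := ndist S x y with hm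
  refine ⟨fun i => x * (l.take i).prod, by simp, ?_, ?_⟩
  · show x * (l.take m).prod = y
    rw [List.take_of_length_le (le_of_eq hlen), hprod]
    group
  · have key : ∀ i j : ℕ, i ≤ m → j ≤ m → i ≤ j →
        ndist S (x * (l.take i).prod) (x * (l.take j).prod) = j - i := by
      intro i j him hjm hij
      have hub : ndist S (x * (l.take i).prod) (x * (l.take j).prod) ≤ j - i := by
        have hsplit : l.take j = l.take i ++ (l.drop i).take (j - i) := by
          have hj : j = i + (j - i) := by omega
          conv_lhs => rw [hj]
          rw [List.take_add]
        have hok : ∀ y ∈ (l.drop i).take (j - i), y ∈ S ∨ y⁻¹ ∈ S := fun y hy =>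
          hl y (List.mem_of_mem_drop (List.mem_of_mem_take hy))
        have hpe : ((l.drop i).take (j - i)).prod =
            (x * (l.take i).prod)⁻¹ * (x * (l.take j).prod) := by
          rw [hsplit, List.prod_append]
          group
        calc ndist S (x * (l.take i).prod) (x * (l.take j).prod)
            ≤ ((l.drop i).take (j - i)).length := ndist_le _ hok hpe
          _ = j - i := by rw [List.length_take, List.length_drop, hlen]; omega
      have h1 : ndist S x (x * (l.take i).prod) ≤ i := by
        calc ndist S x (x * (l.take i).prod) ≤ (l.take i).length :=
            ndist_le _ (fun y hy => hl y (List.mem_of_mem_take hy)) (by group)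
          _ = i := by rw [List.length_take, hlen]; omega
      have h2 : ndist S (x * (l.take j).prod) y ≤ m - j := by
        have hx2 : x⁻¹ * y = (l.take j).prod * (l.drop j).prod := by
          rw [← List.prod_append, List.take_append_drop, hprod]
        have hpe : (l.drop j).prod = (x * (l.take j).prod)⁻¹ * y := by
          rw [mul_inv_rev, mul_assoc, hx2, inv_mul_cancel_left]
        calc ndist S (x * (l.take j).prod) y ≤ (l.drop j).length :=
            ndist_le _ (fun y hy => hl y (List.mem_of_mem_drop hy)) hpe
          _ = m - j := by rw [List.length_drop, hlen]
      have ht1 := ndist_triangle hSgen x (x * (l.take i).prod) y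
      have ht2 := ndist_triangle hSgen (x * (l.take i).prod) (x * (l.take j).prod) y
      have ht3 := ndist_triangle hSgen x (x * (l.take j).prod)
        (x * (l.take i).prod)
      -- lower bound:  m ≤ i + nd(ci,cj) + (m - j)
      have hlb : j - i ≤ ndist S (x * (l.take i).prod) (x * (l.take j).prod) := by
        have h3 := ndist_triangle hSgen x (x * (l.take i).prod) y
        have h4 := ndist_triangle hSgen (x * (l.take i).prod) (x * (l.take j).prod) y
        omega
      omega
    intro i hi j hj
    rcases le_total i j with h | h
    · rw [wdist_eq hSgen, key i j hi hj h, Nat.cast_sub h, abs_sub_comm,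
        abs_of_nonneg (sub_nonneg.2 (by exact_mod_cast h))]
    · rw [wdist_symm hSgen, wdist_eq hSgen, key j i hj hi h, Nat.cast_sub h,
        abs_of_nonneg (sub_nonneg.2 (by exact_mod_cast h))]

/-- balls in the word metric are finite. -/
lemma ball_finite {S : Set G} (hSfin : S.Finite) (n : ℕ) :
    {g : G | ∃ l : List G, (∀ y ∈ l, y ∈ S ∨ y⁻¹ ∈ S) ∧ l.prod = g ∧ l.length ≤ n}.Finite := by
  induction n with
  | zero =>
    apply Set.Finite.subset (Set.finite_singleton (1 : G))
    rintro g ⟨l, -, hp, hlen⟩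
    rw [Set.mem_singleton_iff, ← hp, List.length_eq_zero_iff.mp (Nat.le_zero.mp hlen)]
    rfl
  | succ n ih =>
    apply Set.Finite.subset
      (Set.Finite.union (Set.finite_singleton (1 : G))
        (Set.Finite.image2 (· * ·) (hSfin.union hSfin.inv) ih))
    rintro g ⟨l, hok, hp, hlen⟩
    match l with
    | [] =>
      left
      rw [Set.mem_singleton_iff, ← hp]
      rfl
    | a :: t =>
      right
      refine Set.mem_image2.mpr ⟨a, ?_, t.prod, ⟨t, fun y hy => hok y (List.mem_cons_of_mem a hy),
        rfl, by simpa using hlen⟩, by rw [← hp]; simp⟩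
      rcases hok a List.mem_cons_self with h | h
      · exact Or.inl h
      · exact Or.inr (Set.mem_inv.mpr h)

end AuxWord

section AuxHyp
variable {α : Type*} {d : α → α → ℝ} {w : α} {δ : ℝ}

lemma gpD_symm (hsym : ∀ a b : α, d a b = d b a) (w x y : α) :
    gpD d w x y = gpD d w y x := by
  unfold gpD
  rw [hsym x y]
  ring

lemma tendsto_pair_iff {f : ℕ × ℕ → ℝ} :
    Filter.Tendsto f Filter.atTop Filter.atTop ↔
      ∀ b : ℝ, ∃ N : ℕ, ∀ m n, N ≤ m → N ≤ n → b ≤ f (m, n) := by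
  rw [Filter.tendsto_atTop]
  constructor
  · intro h b
    obtain ⟨a, ha⟩ := Filter.eventually_atTop.mp (h b)
    exact ⟨max a.1 a.2, fun m n hm hn =>
      ha (m, n) ⟨le_trans (le_max_left _ _) hm, le_trans (le_max_right _ _) hn⟩⟩
  · intro h b
    obtain ⟨N, hN⟩ := h b
    rw [Filter.eventually_atTop]
    exact ⟨(N, N), fun q hq => by
      have := hN q.1 q.2 hq.1 hq.2
      simpa using this⟩

lemma eventually_pair_iff {P : ℕ × ℕ → Prop} :
    (∀ᶠ p : ℕ × ℕ in Filter.atTop, P p) ↔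
      ∃ N : ℕ, ∀ m n, N ≤ m → N ≤ n → P (m, n) := by
  rw [Filter.eventually_atTop]
  constructor
  · rintro ⟨a, ha⟩
    exact ⟨max a.1 a.2, fun m n hm hn =>
      ha (m, n) ⟨le_trans (le_max_left _ _) hm, le_trans (le_max_right _ _) hn⟩⟩
  · rintro ⟨N, hN⟩
    exact ⟨(N, N), fun q hq => by
      have := hN q.1 q.2 hq.1 hq.2
      simpa using this⟩

lemma bdryRel_equivalence (hsym : ∀ a b : α, d a b = d b a) (hδ : DeltaHypD d δ) :
    Equivalence (bdryRelD d w) := by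
  constructor
  · exact fun s => s.2
  · intro s t h
    rw [bdryRelD, tendsto_pair_iff] at h ⊢
    intro b
    obtain ⟨N, hN⟩ := h b
    exact ⟨N, fun m n hm hn => by rw [gpD_symm hsym]; exact hN n m hn hm⟩
  · intro s t u hst htu
    rw [bdryRelD, tendsto_pair_iff] at hst htu ⊢
    intro b
    obtain ⟨N₁, hN₁⟩ := hst (b + δ)
    obtain ⟨N₂, hN₂⟩ := htu (b + δ)
    set N := max N₁ N₂ with hNdefN
    refine ⟨N, fun m k hm hk => ?_⟩
    have h1 : b + δ ≤ gpD d w (s.1 m) (t.1 N) :=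
      hN₁ m N (le_trans (le_max_left _ _) hm) (le_max_left _ _)
    have h2 : b + δ ≤ gpD d w (t.1 N) (u.1 k) :=
      hN₂ N k (le_max_right _ _) (le_trans (le_max_right _ _) hk)
    have h3 := hδ w (s.1 m) (t.1 N) (u.1 k)
    have h4 : b + δ ≤ min (gpD d w (s.1 m) (t.1 N)) (gpD d w (t.1 N) (u.1 k)) :=
      le_min h1 h2
    linarith

/-- If the boundary Gromov product of two boundary points is infinite, they coincide. -/
lemma eq_of_bgp_top (hsym : ∀ a b : α, d a b = d b a) (hδ0 : 0 ≤ δ) (hδ : DeltaHypD d δ)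
    {ξ η : BdryD d w} {s₀ t₀ : ℕ → α}
    (hs₀ : ConvTo d w s₀ ξ) (ht₀ : ConvTo d w t₀ η)
    (h : bgpD d w ξ η = ⊤) : ξ = η := by
  obtain ⟨hgs₀, hq₀⟩ := hs₀
  obtain ⟨hgt₀, hq₁⟩ := ht₀
  rw [← hq₀, ← hq₁]
  apply Quot.sound
  show Filter.Tendsto _ _ _
  rw [tendsto_pair_iff]
  intro b
  set b' := max b 0 with hb'
  have hb'0 : 0 ≤ b' := le_max_right _ _
  have hlt : ENNReal.ofReal (b' + 2 * δ) < bgpD d w ξ η := by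
    rw [h]
    exact ENNReal.ofReal_lt_top
  rw [bgpD, lt_iSup_iff] at hlt
  obtain ⟨⟨s, hs⟩, hlt⟩ := hlt
  rw [lt_iSup_iff] at hlt
  obtain ⟨⟨t, ht⟩, hlt⟩ := hlt
  have hev := Filter.eventually_lt_of_lt_liminf hlt
  have hev' : ∀ᶠ p : ℕ × ℕ in Filter.atTop, b' + 2 * δ < gpD d w (s p.1) (t p.2) := by
    filter_upwards [hev] with p hp
    exact (ENNReal.ofReal_lt_ofReal_iff_of_nonneg (by positivity)).mp hp
  obtain ⟨N₁, hN₁⟩ := eventually_pair_iff.mp hev'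
  -- s is asymptotic to s₀, t to t₀
  obtain ⟨hgs, hqs⟩ := hs
  obtain ⟨hgt, hqt⟩ := ht
  have hrel_s : bdryRelD d w ⟨s, hgs⟩ ⟨s₀, hgs₀⟩ := by
    rw [← Equivalence.eqvGen_iff (bdryRel_equivalence hsym hδ)]
    exact Quot.eqvGen_exact (hqs.trans hq₀.symm)
  have hrel_t : bdryRelD d w ⟨t, hgt⟩ ⟨t₀, hgt₀⟩ := by
    rw [← Equivalence.eqvGen_iff (bdryRel_equivalence hsym hδ)]
    exact Quot.eqvGen_exact (hqt.trans hq₁.symm)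
  rw [bdryRelD, tendsto_pair_iff] at hrel_s hrel_t
  obtain ⟨N₂, hN₂⟩ := hrel_s (b' + 2 * δ)
  obtain ⟨N₃, hN₃⟩ := hrel_t (b' + 2 * δ)
  set N := max (max N₁ N₂) N₃ with hNdef
  have hN_1 : N₁ ≤ N := le_trans (le_max_left _ _) (le_max_left _ _)
  have hN_2 : N₂ ≤ N := le_trans (le_max_right _ _) (le_max_left _ _)
  have hN_3 : N₃ ≤ N := le_max_right _ _
  refine ⟨N, fun a c ha hc => ?_⟩
  have h1 : b' + 2 * δ ≤ gpD d w (s N) (s₀ a) := hN₂ N a hN_2 (le_trans hN_2 ha)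
  have h2 : b' + 2 * δ ≤ gpD d w (s N) (t N) := (hN₁ N N hN_1 hN_1).le
  have h3 : b' + 2 * δ ≤ gpD d w (t N) (t₀ c) := hN₃ N c hN_3 (le_trans hN_3 hc)
  have k2 : b' + δ ≤ gpD d w (s N) (t₀ c) := by
    have hmin := le_min h2 h3
    have := hδ w (s N) (t N) (t₀ c)
    linarith
  have k1 : b' ≤ gpD d w (s₀ a) (t₀ c) := by
    have h1' : b' + δ ≤ gpD d w (s₀ a) (s N) := by
      rw [gpD_symm hsym]
      linarith
    have hmin := le_min h1' k2
    have := hδ w (s₀ a) (s N) (t₀ c)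
    linarith
  exact le_trans (le_max_left _ _) k1

end AuxHyp

section AuxGeom
variable {G : Type*} [Group G]

lemma pdistD_le_of_mem {S : Set G} {A : Set G} {a : G} (ha : a ∈ A) (x : G) :
    pdistD (wdist S) x A ≤ wdist S x a := by
  refine csInf_le ⟨0, ?_⟩ ⟨a, ha, rfl⟩
  rintro r ⟨b, -, rfl⟩
  exact wdist_nonneg _ _

lemma exists_near_of_pdist_le {S : Set G} {A : Set G} (hA : A.Nonempty) {x : G} {C : ℝ}
    (h : pdistD (wdist S) x A ≤ C) : ∃ a ∈ A, wdist S x a ≤ C + 1 := by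
  obtain ⟨a₀, ha₀⟩ := hA
  have hne : {r | ∃ a ∈ A, r = wdist S x a}.Nonempty := ⟨_, a₀, ha₀, rfl⟩
  have hlt : sInf {r | ∃ a ∈ A, r = wdist S x a} < C + 1 := lt_of_le_of_lt h (by linarith)
  obtain ⟨r, ⟨a, ha, rfl⟩, hr⟩ := exists_lt_of_csInf_lt hne hlt
  exact ⟨a, ha, hr.le⟩

/-- cosets of a quasiconvex subgroup are quasiconvex. -/
lemma qc_coset {S : Set G} {Cq : ℝ} {H : Subgroup G}
    (hq : QCSetD (wdist S) Cq (H : Set G)) (r : G) :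
    QCSetD (wdist S) Cq (cosetSet H r) := by
  intro c m hc h0 hm i him
  have hinv : DiscGeodD (wdist S) (fun k => r⁻¹ * c k) m := by
    intro a ha b hb
    rw [wdist_left]
    exact hc a ha b hb
  have h0' : (fun k => r⁻¹ * c k) 0 ∈ (H : Set G) := h0
  have hm' : (fun k => r⁻¹ * c k) m ∈ (H : Set G) := hm
  have := hq _ m hinv h0' hm' i him
  have hset : {ρ | ∃ a ∈ cosetSet H r, ρ = wdist S (c i) a} =
      {ρ | ∃ b ∈ (H : Set G), ρ = wdist S (r⁻¹ * c i) b} := by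
    ext ρ
    constructor
    · rintro ⟨a, ha, rfl⟩
      exact ⟨r⁻¹ * a, ha, (wdist_left r⁻¹ (c i) a).symm⟩
    · rintro ⟨b, hb, rfl⟩
      refine ⟨r * b, ?_, ?_⟩
      · show r⁻¹ * (r * b) ∈ H
        rwa [inv_mul_cancel_left]
      · rw [← wdist_left r⁻¹ (c i) (r * b), inv_mul_cancel_left]
  show sInf _ ≤ Cq
  rw [hset]
  exact this

/-- key estimate: the Gromov product of two points of a quasiconvex set is
bounded below by the distance to the set. -/
lemma gp_lower {S : Set G} (hSgen : Subgroup.closure S = ⊤) {δ Cq : ℝ}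
    (hδ0 : 0 ≤ δ) (hδ : DeltaHypD (wdist S) δ) (hCq : 0 ≤ Cq)
    {A : Set G} (hqc : QCSetD (wdist S) Cq A)
    {x y : G} (hx : x ∈ A) (hy : y ∈ A) (w : G) :
    pdistD (wdist S) w A - Cq - 2 * δ - 2 ≤ gpD (wdist S) w x y := by
  obtain ⟨c, hc0, hcm, hgeod⟩ := exists_geodesic hSgen x y
  set d := wdist S with hd
  set m := ndist S x y with hm
  have hdxy : d x y = (m : ℝ) := wdist_eq hSgen x y
  -- symmetric distances
  have hsym : ∀ a b : G, d a b = d b a := fun a b => wdist_symm hSgen a b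
  have htri : ∀ a b c' : G, d a c' ≤ d a b + d b c' := fun a b c' => wdist_triangle hSgen a b c'
  set t := gpD d x w y with htdef
  have ht0 : 0 ≤ t := by
    have := htri w x y
    have hs1 := hsym w x
    unfold t
    unfold gpD
    linarith
  have htm : t ≤ (m : ℝ) := by
    have := htri x y w
    have hs1 := hsym y w
    unfold t
    unfold gpD
    linarith
  set i := ⌊t⌋₊ with hidef
  have hit : (i : ℝ) ≤ t := Nat.floor_le ht0
  have hti : t < (i : ℝ) + 1 := Nat.lt_floor_add_one t
  have him : i ≤ m := by
    have : (i : ℝ) ≤ (m : ℝ) := le_trans hit htm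
    exact_mod_cast this
  set p := c i with hpdef
  have dxp : d x p = (i : ℝ) := by
    have := hgeod 0 (Nat.zero_le m) i him
    rw [hc0] at this
    rw [this]
    simp
  have dpy : d p y = (m : ℝ) - (i : ℝ) := by
    have := hgeod i him m le_rfl
    rw [hcm] at this
    rw [this, abs_sub_comm, abs_of_nonneg (sub_nonneg.2 (by exact_mod_cast him))]
  -- p is a genuine midpoint: gp at p of x, y vanishes
  have hδp := hδ p x w y
  have hgp0 : gpD d p x y = 0 := by
    unfold gpD
    rw [hsym p x, dxp, dpy, hdxy]
    ring
  rw [hgp0] at hδp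
  -- in both cases, d w p ≤ gp_w(x,y) + 2δ + 1
  have hdw : d w p ≤ gpD d w x y + 2 * δ + 1 := by
    have hswx := hsym w x
    have hswy := hsym w y
    have hswp := hsym w p
    have hsxw := hsym x w
    have hspx := hsym p x
    have hspw := hsym p w
    rcases le_total (gpD d p x w) (gpD d p w y) with hmin | hmin
    · have h1 : gpD d p x w ≤ δ := by
        rw [min_eq_left hmin] at hδp
        linarith
      unfold gpD at h1 ⊢
      unfold t at hit hti
      unfold gpD at hit hti
      rw [hspx, dxp] at h1
      linarith
    · have h1 : gpD d p w y ≤ δ := by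
        rw [min_eq_right hmin] at hδp
        linarith
      unfold gpD at h1 ⊢
      unfold t at hit hti
      unfold gpD at hit hti
      rw [dpy] at h1
      linarith
  -- quasiconvexity: p is near A
  have hpd : pdistD d p A ≤ Cq := by
    have := hqc c m hgeod (hc0.symm ▸ hx) (hcm.symm ▸ hy) i him
    exact this
  obtain ⟨a, ha, hda⟩ := exists_near_of_pdist_le ⟨x, hx⟩ hpd
  have : pdistD d w A ≤ d w a := pdistD_le_of_mem ha w
  have h2 : d w a ≤ d w p + d p a := htri w p a
  linarith

end AuxGeom

/-- **Claim (in Proposition qc=discrete).** Let `H` be a quasiconvex subgroup of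
a hyperbolic group `G` with limit set `Λ`, and let `ℒ` be the collection of
translates `gΛ` of `Λ` by representatives of distinct cosets of `H`.  Then for
every `ε > 0` the set `ℒ_ε` of members of `ℒ` of visual diameter at least `ε`
is finite. -/
theorem finitely_many_translates_of_large_visual_diameter
    {G : Type*} [Group G] (S : Set G) (hSfin : S.Finite)
    (hSgen : Subgroup.closure S = ⊤) (hhyp : HypD (wdist S))
    (H : Subgroup G) (hqc : QCSubgroup S H)
    (R : Set G) (hR : IsCosetReps H R) :
    ∀ ε > (0 : ℝ),
      {r : R | ε ≤ vdiamD (wdist S) (1 : G) (cosetLimitSet S H (r : G))}.Finite := by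
  classical
  intro ε hε
  obtain ⟨δ, hδ0, hδ⟩ := hhyp
  obtain ⟨Cq, hCq, hqcH⟩ := hqc
  have hsym : ∀ a b : G, wdist S a b = wdist S b a := wdist_symm hSgen
  set D : ℝ := Cq + 2 * δ + 2 - Real.log (ε / 2) + 1 with hD
  -- main claim: a large limit set forces the coset to pass near the identity
  have key : ∀ r : G, ε ≤ vdiamD (wdist S) (1 : G) (cosetLimitSet S H r) →
      ∃ a, a ∈ cosetSet H r ∧ wdist S 1 a ≤ D := by
    intro r hr
    set A := cosetSet H r with hA
    have hAne : A.Nonempty := ⟨r, by show r⁻¹ * r ∈ H; rw [inv_mul_cancel]; exact one_mem H⟩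
    unfold vdiamD at hr
    set T := {ρ | ∃ ξ ∈ cosetLimitSet S H r, ∃ η ∈ cosetLimitSet S H r,
      ρ = vdistD (wdist S) 1 ξ η} with hT
    have hTne : T.Nonempty := by
      by_contra hc
      rw [Set.not_nonempty_iff_eq_empty] at hc
      rw [hc, Real.sSup_empty] at hr
      linarith
    have hlt : ε / 2 < sSup T := lt_of_lt_of_le (by linarith) hr
    obtain ⟨ρ, hρT, hρ⟩ := exists_lt_of_lt_csSup hTne hlt
    obtain ⟨ξ, hξ, η, hη, rfl⟩ := hρT
    have hne : ξ ≠ η := by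
      intro hcon
      rw [vdistD, if_pos hcon] at hρ
      linarith
    have hv : vdistD (wdist S) 1 ξ η = Real.exp (-(bgpD (wdist S) 1 ξ η).toReal) := by
      rw [vdistD, if_neg hne]
    obtain ⟨s, hsA, hsConv⟩ := hξ
    obtain ⟨t, htA, htConv⟩ := hη
    have htop : bgpD (wdist S) 1 ξ η ≠ ⊤ := fun hcon =>
      hne (eq_of_bgp_top hsym hδ0 hδ hsConv htConv hcon)
    have hgl : ∀ p : ℕ × ℕ,
        pdistD (wdist S) 1 A - Cq - 2 * δ - 2 ≤ gpD (wdist S) 1 (s p.1) (t p.2) :=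
      fun p => gp_lower hSgen hδ0 hδ hCq (qc_coset hqcH r) (hsA p.1) (htA p.2) 1
    have hliminf : ENNReal.ofReal (pdistD (wdist S) 1 A - Cq - 2 * δ - 2) ≤
        bgpD (wdist S) 1 ξ η := by
      have h1 : ENNReal.ofReal (pdistD (wdist S) 1 A - Cq - 2 * δ - 2) ≤
          Filter.liminf (fun p : ℕ × ℕ =>
            ENNReal.ofReal (gpD (wdist S) 1 (s p.1) (t p.2))) Filter.atTop :=
        Filter.le_liminf_of_le (by isBoundedDefault)
          (Filter.Eventually.of_forall fun p => ENNReal.ofReal_le_ofReal (hgl p))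
      refine le_trans h1 ?_
      unfold bgpD
      exact le_iSup_of_le ⟨s, hsConv⟩ (le_iSup_of_le ⟨t, htConv⟩ le_rfl)
    have hpd : pdistD (wdist S) 1 A - Cq - 2 * δ - 2 ≤ (bgpD (wdist S) 1 ξ η).toReal := by
      rcases le_or_gt (pdistD (wdist S) 1 A - Cq - 2 * δ - 2) 0 with h | h
      · exact le_trans h ENNReal.toReal_nonneg
      · have h2 := ENNReal.toReal_mono htop hliminf
        rwa [ENNReal.toReal_ofReal h.le] at h2
    have hexp : ε / 2 < Real.exp (-(bgpD (wdist S) 1 ξ η).toReal) := by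
      rw [← hv]; exact hρ
    have hlog : Real.log (ε / 2) < -(bgpD (wdist S) 1 ξ η).toReal := by
      have := Real.log_lt_log (by linarith) hexp
      rwa [Real.log_exp] at this
    have hpdist : pdistD (wdist S) 1 A ≤ Cq + 2 * δ + 2 - Real.log (ε / 2) := by linarith
    obtain ⟨a, ha, hda⟩ := exists_near_of_pdist_le hAne hpdist
    exact ⟨a, ha, by rw [hD]; linarith⟩
  -- now conclude finiteness via finiteness of balls
  set n : ℕ := ⌊D⌋₊ with hn
  set f : R → G := fun r =>
    if h : ∃ a, a ∈ cosetSet H (r : G) ∧ wdist S 1 a ≤ D then h.choose else 1 with hf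
  apply Set.Finite.of_finite_image (f := f)
  · apply Set.Finite.subset (ball_finite hSfin n)
    rintro g ⟨r, hr, rfl⟩
    have hex : ∃ a, a ∈ cosetSet H (r : G) ∧ wdist S 1 a ≤ D := key (r : G) hr
    rw [hf]
    simp only
    rw [dif_pos hex]
    obtain ⟨haA, hale⟩ := hex.choose_spec
    have hnd : ndist S 1 hex.choose ≤ n := by
      rw [wdist_eq hSgen] at hale
      exact Nat.le_floor hale
    obtain ⟨l, hl, hprod, hlen⟩ := Nat.sInf_mem (genSet_nonempty hSgen ((1 : G)⁻¹ * hex.choose))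
    change l.length = ndist S 1 hex.choose at hlen
    refine ⟨l, hl, by rw [hprod]; simp, ?_⟩
    rw [hlen]
    exact hnd
  · intro r₁ h₁ r₂ h₂ hfeq
    have hex₁ : ∃ a, a ∈ cosetSet H (r₁ : G) ∧ wdist S 1 a ≤ D := key (r₁ : G) h₁
    have hex₂ : ∃ a, a ∈ cosetSet H (r₂ : G) ∧ wdist S 1 a ≤ D := key (r₂ : G) h₂
    rw [hf] at hfeq
    simp only at hfeq
    rw [dif_pos hex₁, dif_pos hex₂] at hfeq
    have ha₁ : hex₁.choose ∈ cosetSet H (r₁ : G) := hex₁.choose_spec.1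
    have ha₂ : hex₁.choose ∈ cosetSet H (r₂ : G) := by
      rw [hfeq]
      exact hex₂.choose_spec.1
    obtain ⟨u, hu, huniq⟩ := hR hex₁.choose
    have e₁ : (r₁ : G) = u := huniq (r₁ : G) ⟨r₁.2, by
      have : (r₁ : G)⁻¹ * hex₁.choose ∈ H := ha₁
      have := inv_mem this
      rwa [mul_inv_rev, inv_inv] at this⟩
    have e₂ : (r₂ : G) = u := huniq (r₂ : G) ⟨r₂.2, by
      have : (r₂ : G)⁻¹ * hex₁.choose ∈ H := ha₂
      have := inv_mem this
      rwa [mul_inv_rev, inv_inv] at this⟩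
    exact Subtype.ext (e₁.trans e₂.symm)


end RelRig
end
end

section
/- Given δ > 0 there exist D, C₁, k, ε such that the following holds: if a, b, c, d are points of a δ-hyperbolic geodesic metric space (Z, d) with d(a,[b,c]) = d(a,b), d(d,[b,c]) = d(c,d), and d(b,c) ≥ D, then the concatenation [a,b] ∪ [b,c] ∪ [c,d] lies in a C₁-neighborhood of any geodesic joining a and d, and is a (k,ε)-quasigeodesic. -/
/-!
Common coarse-geometric definitions used to formalize statements from
"Relative Rigidity, Quasiconvexity and C-Complexes" (Mahan Mj).

We model the Cayley graph of a finitely generated group by the group itself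
equipped with a word metric (the vertex set of the Cayley graph, with
bi-infinite geodesics modelled by `ℤ`-parametrized discrete geodesics), and we
set up all basic notions (Gromov products, hyperbolicity, the Gromov boundary
via Gromov sequences, limit sets, joins, quasiconvexity, electric metrics and
relative hyperbolicity à la Farb, uniformly proper maps, quasi-isometries)
relative to an abstract distance function `d : α → α → ℝ`.
-/

open Filter Set Metric
open scoped ENNReal

noncomputable section

namespace RelRig

universe u v

variable {α β : Type*}

/-- the concatenation of three unit-speed paths of lengths `l₁`, `l₂`, `·`. -/
def concat3 {Z : Type*} (l₁ l₂ : ℝ) (γ₁ γ₂ γ₃ : ℝ → Z) : ℝ → Z :=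
  fun t => if t ≤ l₁ then γ₁ t else if t ≤ l₁ + l₂ then γ₂ (t - l₁) else γ₃ (t - (l₁ + l₂))


section PerpsProof

private lemma min_le_of_lt_right' {A B C : ℝ} (h : min A B ≤ C) (hB : C < B) : A ≤ C := by
  rcases le_total A B with h' | h'
  · rwa [min_eq_left h'] at h
  · rw [min_eq_right h'] at h; linarith

/-- If `b'` is a nearest point of the geodesic `g` to `P`, then
`d(P, g u) ≥ d(P,b') + u - 8δ`. -/
private lemma perp_lower {Z : Type*} [MetricSpace Z] {δ : ℝ} (hδ : 0 < δ)
    (hyp : DeltaHypD (fun x y : Z => dist x y) δ)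
    {b' : Z} {g : ℝ → Z} {L : ℝ}
    (hg0 : g 0 = b')
    (hgd : ∀ s ∈ Icc (0:ℝ) L, ∀ t ∈ Icc (0:ℝ) L, dist (g s) (g t) = |s - t|)
    {P : Z} (hnear : ∀ v ∈ Icc (0:ℝ) L, dist P b' ≤ dist P (g v))
    {u : ℝ} (hu0 : 0 ≤ u) (huL : u ≤ L) :
    dist P b' + u - 8*δ ≤ dist P (g u) := by
  have hL0 : (0:ℝ) ≤ L := le_trans hu0 huL
  have h0m : (0:ℝ) ∈ Icc (0:ℝ) L := ⟨le_rfl, hL0⟩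
  have hum : u ∈ Icc (0:ℝ) L := ⟨hu0, huL⟩
  have hbu : dist b' (g u) = u := by
    rw [← hg0, hgd 0 h0m u hum, zero_sub, abs_neg, abs_of_nonneg hu0]
  rcases le_or_gt u (4*δ) with hcase | hcase
  · have htri := dist_triangle P (g u) b'
    have hc : dist (g u) b' = u := by rw [dist_comm]; exact hbu
    linarith
  · have h4m : (4*δ) ∈ Icc (0:ℝ) L := ⟨by linarith, by linarith⟩
    have hbR : dist b' (g (4*δ)) = 4*δ := by
      rw [← hg0, hgd 0 h0m _ h4m, zero_sub, abs_neg, abs_of_nonneg (by linarith)]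
    have hRu : dist (g u) (g (4*δ)) = u - 4*δ := by
      rw [hgd u hum _ h4m, abs_of_nonneg (by linarith)]
    have hPR : dist P b' ≤ dist P (g (4*δ)) := hnear _ h4m
    have h4 := hyp b' P (g u) (g (4*δ))
    simp only [gpD] at h4
    rw [dist_comm b' P, hbu, hbR, hRu] at h4
    have hmin : min ((dist P b' + u - dist P (g u)) / 2)
        ((u + 4*δ - (u - 4*δ)) / 2) ≤ 3*δ := by linarith
    have := min_le_of_lt_right' hmin (by linarith)
    linarith

/-- If `b` (resp. `c`) is close to a nearest point of `[b,c]` to `P` (resp. `Q`)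
then `d(P,Q) ≥ d(P,b) + d(b,c) + d(c,Q) - 18δ`. -/
private lemma perp_cross {Z : Type*} [MetricSpace Z] {δ : ℝ} (hδ : 0 < δ)
    (hyp : DeltaHypD (fun x y : Z => dist x y) δ)
    {P Q b c : Z} (hbc : 16*δ ≤ dist b c)
    (h1 : dist P b + dist b c - 8*δ ≤ dist P c)
    (h2 : dist Q c + dist b c - 8*δ ≤ dist Q b) :
    dist P b + dist b c + dist c Q - 18*δ ≤ dist P Q := by
  have h4 := hyp b P Q c
  simp only [gpD] at h4
  rw [dist_comm b P, dist_comm b Q] at h4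
  have hcQ : dist c Q = dist Q c := dist_comm c Q
  have hmin : min ((dist P b + dist Q b - dist P Q) / 2)
      ((dist Q b + dist b c - dist Q c) / 2) ≤ 5*δ := by linarith
  have := min_le_of_lt_right' hmin (by linarith)
  linarith

/-- A point `P` with geodesic defect `C` w.r.t. `a, d` lies within `C/2 + 2δ`
of any geodesic from `a` to `d`. -/
private lemma near_geodesic {Z : Type*} [MetricSpace Z] {δ C : ℝ} (hδ : 0 < δ)
    (hyp : DeltaHypD (fun x y : Z => dist x y) δ)
    {a d P : Z} {γ₀ : ℝ → Z} (h0 : GeodParam γ₀ a d)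
    (hC : dist a P + dist P d ≤ dist a d + C) :
    ∃ s ∈ Icc (0:ℝ) (dist a d), dist P (γ₀ s) ≤ C/2 + 2*δ := by
  obtain ⟨hγa, hγd, hγ⟩ := h0
  have t1 := dist_triangle P a d
  have t2 := dist_triangle a d P
  have hc1 : dist P a = dist a P := dist_comm P a
  have hc2 : dist d P = dist P d := dist_comm d P
  have hs0 : 0 ≤ (dist a P + dist a d - dist P d) / 2 := by linarith
  have hsd : (dist a P + dist a d - dist P d) / 2 ≤ dist a d := by linarith
  refine ⟨(dist a P + dist a d - dist P d) / 2, ⟨hs0, hsd⟩, ?_⟩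
  have hadm : dist a d ∈ Icc (0:ℝ) (dist a d) := ⟨dist_nonneg, le_rfl⟩
  have h0m : (0:ℝ) ∈ Icc (0:ℝ) (dist a d) := ⟨le_rfl, dist_nonneg⟩
  have hsm : (dist a P + dist a d - dist P d) / 2 ∈ Icc (0:ℝ) (dist a d) := ⟨hs0, hsd⟩
  have haQ : dist a (γ₀ ((dist a P + dist a d - dist P d) / 2))
      = (dist a P + dist a d - dist P d) / 2 := by
    have e := hγ 0 h0m _ hsm
    rw [hγa, zero_sub, abs_neg, abs_of_nonneg hs0] at e
    exact e
  have hQd : dist (γ₀ ((dist a P + dist a d - dist P d) / 2)) d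
      = dist a d - (dist a P + dist a d - dist P d) / 2 := by
    have e := hγ _ hsm _ hadm
    rw [hγd, abs_of_nonpos (by linarith)] at e
    rw [e]; ring
  have h4 := hyp a P d (γ₀ ((dist a P + dist a d - dist P d) / 2))
  simp only [gpD] at h4
  rw [dist_comm d (γ₀ ((dist a P + dist a d - dist P d) / 2)), hQd, haQ] at h4
  have hmin : (dist a P + dist a d - dist P d) / 2
      ≤ min ((dist a P + dist a d - dist P d) / 2)
        ((dist a d + (dist a P + dist a d - dist P d) / 2 -
          (dist a d - (dist a P + dist a d - dist P d) / 2)) / 2) :=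
    le_min le_rfl (by linarith)
  linarith

end PerpsProof

/-- **Lemma (perps).** Given `δ > 0` there exist `D, C₁, k, ε` such that: if
`a, b, c, d` are points of a `δ`-hyperbolic geodesic metric space `(Z, d)` with
`d(a, [b,c]) = d(a,b)`, `d(d, [b,c]) = d(c,d)` and `d(b,c) ≥ D`, then the
concatenation `[a,b] ∪ [b,c] ∪ [c,d]` lies in a `C₁`-neighbourhood of any
geodesic joining `a` and `d`, and (in its arclength parametrization) is a
`(k, ε)`-quasigeodesic. -/
theorem projections_concatenation_is_quasigeodesic :
    ∀ δ > (0 : ℝ), ∃ D C₁ k ε : ℝ,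
      ∀ (Z : Type u) [inst : MetricSpace Z], GeodesicSpace Z →
        DeltaHypD (fun x y : Z => dist x y) δ →
        ∀ (a b c d : Z) (γ₁ γ₂ γ₃ : ℝ → Z),
          GeodParam γ₁ a b → GeodParam γ₂ b c → GeodParam γ₃ c d →
          (∀ t ∈ Icc (0 : ℝ) (dist b c), dist a b ≤ dist a (γ₂ t)) →
          (∀ t ∈ Icc (0 : ℝ) (dist b c), dist d c ≤ dist d (γ₂ t)) →
          D ≤ dist b c →
          (∀ γ₀ : ℝ → Z, GeodParam γ₀ a d →
            ∀ t ∈ Icc (0 : ℝ) (dist a b + dist b c + dist c d),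
              ∃ s ∈ Icc (0 : ℝ) (dist a d),
                dist (concat3 (dist a b) (dist b c) γ₁ γ₂ γ₃ t) (γ₀ s) ≤ C₁) ∧
          (∀ s ∈ Icc (0 : ℝ) (dist a b + dist b c + dist c d),
            ∀ t ∈ Icc (0 : ℝ) (dist a b + dist b c + dist c d),
              |s - t| ≤ k * dist (concat3 (dist a b) (dist b c) γ₁ γ₂ γ₃ s)
                  (concat3 (dist a b) (dist b c) γ₁ γ₂ γ₃ t) + ε) := by
  intro δ hδ
  refine ⟨16*δ, 11*δ, 1, 18*δ, ?_⟩
  intro Z inst hgeo hhyp a b c d γ₁ γ₂ γ₃ h1 h2 h3 hna hnd hD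
  obtain ⟨h1a, h1b, h1g⟩ := h1
  obtain ⟨h2a, h2b, h2g⟩ := h2
  obtain ⟨h3a, h3b, h3g⟩ := h3
  set x := concat3 (dist a b) (dist b c) γ₁ γ₂ γ₃ with hxdef
  -- basic distance facts on each segment
  have hp1 : ∀ s, 0 ≤ s → s ≤ dist a b →
      dist a (γ₁ s) = s ∧ dist (γ₁ s) b = dist a b - s := by
    intro s hs0 hs1
    constructor
    · rw [← h1a, h1g 0 ⟨le_rfl, dist_nonneg⟩ s ⟨hs0, hs1⟩, zero_sub, abs_neg,
        abs_of_nonneg hs0]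
    · have e := h1g s ⟨hs0, hs1⟩ _ ⟨dist_nonneg, le_rfl⟩
      rw [h1b, abs_of_nonpos (by linarith)] at e
      rw [e]; ring
  have hp2 : ∀ u, 0 ≤ u → u ≤ dist b c →
      dist b (γ₂ u) = u ∧ dist (γ₂ u) c = dist b c - u := by
    intro u hu0 hu1
    constructor
    · rw [← h2a, h2g 0 ⟨le_rfl, dist_nonneg⟩ u ⟨hu0, hu1⟩, zero_sub, abs_neg,
        abs_of_nonneg hu0]
    · have e := h2g u ⟨hu0, hu1⟩ _ ⟨dist_nonneg, le_rfl⟩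
      rw [h2b, abs_of_nonpos (by linarith)] at e
      rw [e]; ring
  have hp3 : ∀ w, 0 ≤ w → w ≤ dist c d →
      dist c (γ₃ w) = w ∧ dist (γ₃ w) d = dist c d - w := by
    intro w hw0 hw1
    constructor
    · rw [← h3a, h3g 0 ⟨le_rfl, dist_nonneg⟩ w ⟨hw0, hw1⟩, zero_sub, abs_neg,
        abs_of_nonneg hw0]
    · have e := h3g w ⟨hw0, hw1⟩ _ ⟨dist_nonneg, le_rfl⟩
      rw [h3b, abs_of_nonpos (by linarith)] at e
      rw [e]; ring
  -- quantitative lower bounds between segments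
  have fact12 : ∀ s, 0 ≤ s → s ≤ dist a b → ∀ u, 0 ≤ u → u ≤ dist b c →
      (dist a b - s) + u - 8*δ ≤ dist (γ₁ s) (γ₂ u) := by
    intro s hs0 hs1 u hu0 hu1
    have hPb : dist (γ₁ s) b = dist a b - s := (hp1 s hs0 hs1).2
    have haP : dist a (γ₁ s) = s := (hp1 s hs0 hs1).1
    have hnear : ∀ v ∈ Icc (0:ℝ) (dist b c), dist (γ₁ s) b ≤ dist (γ₁ s) (γ₂ v) := by
      intro v hv
      have h5 := hna v hv
      have htri := dist_triangle a (γ₁ s) (γ₂ v)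
      rw [haP] at htri
      rw [hPb]
      linarith
    have h6 := perp_lower hδ hhyp h2a h2g hnear hu0 hu1
    linarith
  have fact23 : ∀ u, 0 ≤ u → u ≤ dist b c → ∀ w, 0 ≤ w → w ≤ dist c d →
      (dist b c - u) + w - 8*δ ≤ dist (γ₂ u) (γ₃ w) := by
    intro u hu0 hu1 w hw0 hw1
    have hcQ : dist c (γ₃ w) = w := (hp3 w hw0 hw1).1
    have hQd : dist (γ₃ w) d = dist c d - w := (hp3 w hw0 hw1).2
    have hg0' : γ₂ (dist b c - 0) = c := by rw [sub_zero]; exact h2b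
    have hgd' : ∀ s ∈ Icc (0:ℝ) (dist b c), ∀ t ∈ Icc (0:ℝ) (dist b c),
        dist (γ₂ (dist b c - s)) (γ₂ (dist b c - t)) = |s - t| := by
      intro s hs t ht
      rw [h2g _ ⟨by linarith [hs.2], by linarith [hs.1]⟩
          _ ⟨by linarith [ht.2], by linarith [ht.1]⟩,
        show dist b c - s - (dist b c - t) = t - s by ring, abs_sub_comm]
    have hnear : ∀ v ∈ Icc (0:ℝ) (dist b c),
        dist (γ₃ w) c ≤ dist (γ₃ w) (γ₂ (dist b c - v)) := by
      intro v hv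
      have hm : dist b c - v ∈ Icc (0:ℝ) (dist b c) :=
        ⟨by linarith [hv.2], by linarith [hv.1]⟩
      have hdc := hnd _ hm
      have htri := dist_triangle d (γ₃ w) (γ₂ (dist b c - v))
      have e1 : dist d (γ₃ w) = dist c d - w := by rw [dist_comm]; exact hQd
      have e2 : dist (γ₃ w) c = w := by rw [dist_comm]; exact hcQ
      have e3 : dist d c = dist c d := dist_comm d c
      linarith
    have key := perp_lower hδ hhyp hg0' hgd' hnear
      (by linarith : (0:ℝ) ≤ dist b c - u) (by linarith)
    rw [show dist b c - (dist b c - u) = u by ring] at key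
    have e2 : dist (γ₃ w) c = w := by rw [dist_comm]; exact hcQ
    have e4 : dist (γ₂ u) (γ₃ w) = dist (γ₃ w) (γ₂ u) := dist_comm _ _
    linarith
  have fact13 : ∀ s, 0 ≤ s → s ≤ dist a b → ∀ w, 0 ≤ w → w ≤ dist c d →
      (dist a b - s) + dist b c + w - 18*δ ≤ dist (γ₁ s) (γ₃ w) := by
    intro s hs0 hs1 w hw0 hw1
    have hPb : dist (γ₁ s) b = dist a b - s := (hp1 s hs0 hs1).2
    have hcQ : dist c (γ₃ w) = w := (hp3 w hw0 hw1).1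
    have hbcnn : (0:ℝ) ≤ dist b c := dist_nonneg
    have h1' : dist (γ₁ s) b + dist b c - 8*δ ≤ dist (γ₁ s) c := by
      have h7 := fact12 s hs0 hs1 (dist b c) hbcnn le_rfl
      rw [h2b] at h7
      linarith
    have h2' : dist (γ₃ w) c + dist b c - 8*δ ≤ dist (γ₃ w) b := by
      have h7 := fact23 0 le_rfl hbcnn w hw0 hw1
      rw [h2a] at h7
      have e1 : dist (γ₃ w) c = dist c (γ₃ w) := dist_comm _ _
      have e2 : dist (γ₃ w) b = dist b (γ₃ w) := dist_comm _ _
      linarith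
    have h8 := perp_cross hδ hhyp hD h1' h2'
    linarith
  have hAD : dist a b + dist b c + dist c d - 18*δ ≤ dist a d := by
    have h7 := fact13 0 le_rfl dist_nonneg (dist c d) dist_nonneg le_rfl
    rw [h1a, h3b] at h7
    linarith
  -- evaluation of the concatenation in each region
  have xeq1 : ∀ t, t ≤ dist a b → x t = γ₁ t := by
    intro t ht; simp [hxdef, concat3, ht]
  have xeq2 : ∀ t, ¬ t ≤ dist a b → t ≤ dist a b + dist b c →
      x t = γ₂ (t - dist a b) := by
    intro t h1t h2t; simp [hxdef, concat3, h1t, h2t]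
  have xeq3 : ∀ t, ¬ t ≤ dist a b → ¬ t ≤ dist a b + dist b c →
      x t = γ₃ (t - (dist a b + dist b c)) := by
    intro t h1t h2t; simp [hxdef, concat3, h1t, h2t]
  constructor
  · -- the concatenation lies near any geodesic from a to d
    intro γ₀ hγ₀ t ht
    obtain ⟨ht0, htL⟩ := ht
    have hbound : dist a (x t) ≤ t ∧
        dist (x t) d ≤ (dist a b + dist b c + dist c d) - t := by
      by_cases hr1 : t ≤ dist a b
      · rw [xeq1 t hr1]
        obtain ⟨e1, e2⟩ := hp1 t ht0 hr1
        refine ⟨e1.le, ?_⟩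
        have t1 := dist_triangle (γ₁ t) b d
        have t2 := dist_triangle b c d
        linarith
      · by_cases hr2 : t ≤ dist a b + dist b c
        · rw [xeq2 t hr1 hr2]
          obtain ⟨e1, e2⟩ := hp2 (t - dist a b) (by linarith [not_le.1 hr1]) (by linarith)
          have t1 := dist_triangle a b (γ₂ (t - dist a b))
          have t2 := dist_triangle (γ₂ (t - dist a b)) c d
          constructor <;> linarith
        · rw [xeq3 t hr1 hr2]
          obtain ⟨e1, e2⟩ := hp3 (t - (dist a b + dist b c))
            (by linarith [not_le.1 hr2]) (by linarith)
          have t1 := dist_triangle a c (γ₃ (t - (dist a b + dist b c)))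
          have t2 := dist_triangle a b c
          constructor <;> linarith
    have hC : dist a (x t) + dist (x t) d ≤ dist a d + 18*δ := by
      linarith [hbound.1, hbound.2, hAD]
    obtain ⟨s, hsm, hPQ⟩ := near_geodesic hδ hhyp hγ₀ hC
    exact ⟨s, hsm, by linarith⟩
  · -- quasigeodesic property
    have key : ∀ s t, 0 ≤ s → s ≤ t → t ≤ dist a b + dist b c + dist c d →
        t - s ≤ dist (x s) (x t) + 18*δ := by
      intro s t hs0 hst htL
      by_cases hs1 : s ≤ dist a b
      · by_cases ht1 : t ≤ dist a b
        · rw [xeq1 s hs1, xeq1 t ht1,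
            h1g s ⟨hs0, hs1⟩ t ⟨le_trans hs0 hst, ht1⟩, abs_of_nonpos (by linarith)]
          linarith
        · by_cases ht2 : t ≤ dist a b + dist b c
          · rw [xeq1 s hs1, xeq2 t ht1 ht2]
            have h7 := fact12 s hs0 hs1 (t - dist a b)
              (by linarith [not_le.1 ht1]) (by linarith)
            linarith
          · rw [xeq1 s hs1, xeq3 t ht1 ht2]
            have h7 := fact13 s hs0 hs1 (t - (dist a b + dist b c))
              (by linarith [not_le.1 ht2]) (by linarith)
            linarith
      · have hs1' := not_le.1 hs1
        have ht1 : ¬ t ≤ dist a b := fun h => hs1 (le_trans hst h)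
        by_cases hs2 : s ≤ dist a b + dist b c
        · by_cases ht2 : t ≤ dist a b + dist b c
          · rw [xeq2 s hs1 hs2, xeq2 t ht1 ht2,
              h2g _ ⟨by linarith, by linarith⟩ _ ⟨by linarith, by linarith⟩,
              abs_of_nonpos (by linarith)]
            linarith
          · rw [xeq2 s hs1 hs2, xeq3 t ht1 ht2]
            have h7 := fact23 (s - dist a b) (by linarith) (by linarith)
              (t - (dist a b + dist b c)) (by linarith [not_le.1 ht2]) (by linarith)
            linarith
        · have hs2' := not_le.1 hs2
          have ht2 : ¬ t ≤ dist a b + dist b c := fun h => hs2 (le_trans hst h)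
          rw [xeq3 s hs1 hs2, xeq3 t ht1 ht2,
            h3g _ ⟨by linarith, by linarith⟩ _ ⟨by linarith, by linarith⟩,
            abs_of_nonpos (by linarith)]
          linarith
    intro s hs t ht
    rcases le_total s t with h | h
    · have h7 := key s t hs.1 h ht.2
      rw [abs_of_nonpos (by linarith), one_mul]
      linarith
    · have h7 := key t s ht.1 h hs.2
      rw [abs_of_nonneg (by linarith), one_mul, dist_comm (x s) (x t)]
      linarith

end RelRig
end
end
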